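/- arXiv:0906.2020 — 6 statements merged into one kernel-verified Lean document; each statement's English description precedes it below -/
import Mathlib

section
/- For the single-machine problem of selecting a subset of jobs and scheduling them to minimize the sum of completion times: if profit(j,C,L) denotes the maximum profit collectible by scheduling a subset of jobs {1,...,j} (sorted so that p_1 ≤ ... ≤ p_j) with sum of completion times at most C and makespan exactly L, then profit(j,C,L) = max{ profit(j−1,C,L), π_j + profit(j−1, C−L, L−p_j) }. -/
/-- Makespan of a set of jobs `S` scheduled on a single machine. -/
def mkspan {n : ℕ} (p : Fin n → ℕ) (S : Finset (Fin n)) : ℕ := ∑ k ∈ S, p k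

/-- Sum of completion times of the jobs of `S` scheduled in increasing index order
(i.e. SPT order, when processing times are sorted). -/
def sumC {n : ℕ} (p : Fin n → ℕ) (S : Finset (Fin n)) : ℕ :=
  ∑ k ∈ S, ∑ k' ∈ S.filter (fun k' => k' ≤ k), p k'

/-- `profitDP p π j C L` is the maximum profit collectible by scheduling a subset of
the first `j` jobs (SPT order) with sum of completion times at most `C` and makespan
exactly `L` (`⊥` if no such subset exists). -/
def profitDP {n : ℕ} (p π : Fin n → ℕ) (j : ℕ) (C L : ℤ) : WithBot ℕ :=
  ((Finset.univ : Finset (Fin n)).powerset.filter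
      (fun S => (∀ k : Fin n, k ∈ S → (k : ℕ) < j) ∧ (sumC p S : ℤ) ≤ C ∧ (mkspan p S : ℤ) = L)).sup
    (fun S => ((∑ k ∈ S, π k : ℕ) : WithBot ℕ))

/-! A feasible subset of the first `j + 1` jobs either avoids job `j`, or is `insert j T` with
`T` a subset of the first `j` jobs. In the second case job `j` is scheduled last, so it completes
at the makespan `L` and leaves the other completion times unchanged: `T` has makespan `L - p j`
and sum of completion times at most `C - L`. Taking the maximal profit over both kinds of
subsets gives the recurrence. -/

open Finset

namespace profitDP

variable {n : ℕ} {p : Fin n → ℕ} {j : Fin n} {S T : Finset (Fin n)} {C L : ℤ}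

def feasibleSets (p : Fin n → ℕ) (j : ℕ) (C L : ℤ) : Finset (Finset (Fin n)) :=
  (univ : Finset (Fin n)).powerset.filter fun S =>
    (∀ k : Fin n, k ∈ S → (k : ℕ) < j) ∧ (sumC p S : ℤ) ≤ C ∧ (mkspan p S : ℤ) = L

theorem eq_sup_feasibleSets (p π : Fin n → ℕ) (j : ℕ) (C L : ℤ) :
    profitDP p π j C L =
      (feasibleSets p j C L).sup fun S => ((∑ k ∈ S, π k : ℕ) : WithBot ℕ) :=
  rfl

theorem mem_feasibleSets {j : ℕ} :
    S ∈ feasibleSets p j C L ↔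
      (∀ k ∈ S, (k : ℕ) < j) ∧ (sumC p S : ℤ) ≤ C ∧ (mkspan p S : ℤ) = L := by
  simp [feasibleSets]

theorem notMem_of_mem_feasibleSets (hS : S ∈ feasibleSets p j C L) : j ∉ S :=
  fun hj => lt_irrefl _ ((mem_feasibleSets.1 hS).1 j hj)

theorem mkspan_insert_of_forall_lt (hT : ∀ k ∈ T, k < j) :
    mkspan p (insert j T) = p j + mkspan p T :=
  sum_insert fun hj => lt_irrefl j (hT j hj)

theorem sumC_insert_of_forall_lt (hT : ∀ k ∈ T, k < j) :
    sumC p (insert j T) = mkspan p (insert j T) + sumC p T := by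
  have hj : j ∉ T := fun hj => lt_irrefl j (hT j hj)
  have h_last : (insert j T).filter (· ≤ j) = insert j T :=
    filter_true_of_mem fun k hk => (mem_insert.1 hk).elim le_of_eq fun hk => (hT k hk).le
  unfold sumC
  rw [sum_insert hj, h_last]
  congr 1
  refine sum_congr rfl fun k hk => ?_
  rw [filter_insert, if_neg (not_le.2 (hT k hk))]

theorem insert_mem_feasibleSets_succ_iff (hT : ∀ k ∈ T, k < j) :
    insert j T ∈ feasibleSets p (j + 1) C L ↔ T ∈ feasibleSets p j (C - L) (L - p j) := by
  have h_lt : ∀ k ∈ insert j T, (k : ℕ) < j + 1 := fun k hk =>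
    (mem_insert.1 hk).elim (fun h => h ▸ Nat.lt_succ_self _) fun hk => Nat.lt_succ_of_lt (hT k hk)
  simp only [mem_feasibleSets, sumC_insert_of_forall_lt hT, mkspan_insert_of_forall_lt hT,
    iff_true_intro h_lt, true_and, iff_true_intro (fun k hk => Fin.lt_def.1 (hT k hk))]
  push_cast
  omega

theorem mem_feasibleSets_succ_iff_of_notMem (hj : j ∉ S) :
    S ∈ feasibleSets p (j + 1) C L ↔ S ∈ feasibleSets p j C L := by
  have h_lt : (∀ k ∈ S, (k : ℕ) < j + 1) ↔ ∀ k ∈ S, (k : ℕ) < j :=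
    forall₂_congr fun k hk => by
      have : (k : ℕ) ≠ j := fun h => hj (Fin.ext h ▸ hk)
      omega
  simp only [mem_feasibleSets, h_lt]

theorem feasibleSets_succ (p : Fin n → ℕ) (j : Fin n) (C L : ℤ) :
    feasibleSets p (j + 1) C L =
      feasibleSets p j C L ∪ (feasibleSets p j (C - L) (L - p j)).image (insert j) := by
  ext S
  rw [mem_union, mem_image]
  by_cases hj : j ∈ S
  · rw [or_iff_right fun h => notMem_of_mem_feasibleSets h hj]
    constructor
    · intro hS
      have hT : ∀ k ∈ S.erase j, k < j := fun k hk =>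
        have hk_le : (k : ℕ) < j + 1 := (mem_feasibleSets.1 hS).1 k (mem_of_mem_erase hk)
        (Fin.le_def.2 (Nat.lt_succ_iff.1 hk_le)).lt_of_ne (ne_of_mem_erase hk)
      refine ⟨S.erase j, ?_, insert_erase hj⟩
      rwa [← insert_mem_feasibleSets_succ_iff hT, insert_erase hj]
    · rintro ⟨T, hT, rfl⟩
      have hT_lt : ∀ k ∈ T, k < j := fun k hk => Fin.lt_def.2 ((mem_feasibleSets.1 hT).1 k hk)
      exact (insert_mem_feasibleSets_succ_iff hT_lt).2 hT
  · rw [mem_feasibleSets_succ_iff_of_notMem hj]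
    simp only [iff_self_or]
    rintro ⟨T, -, rfl⟩
    exact absurd (mem_insert_self j T) hj

end profitDP

theorem stmt_7_general (n : ℕ) (p π : Fin n → ℕ)
    (j : Fin n) (C L : ℤ) :
    profitDP p π ((j : ℕ) + 1) C L =
      profitDP p π (j : ℕ) C L ⊔
        (((π j : ℕ) : WithBot ℕ) + profitDP p π (j : ℕ) (C - L) (L - (p j : ℤ))) := by
  have h_add : ((π j : ℕ) : WithBot ℕ) + profitDP p π j (C - L) (L - p j) =
      (profitDP.feasibleSets p j (C - L) (L - p j)).sup
        (fun T => ((∑ k ∈ insert j T, π k : ℕ) : WithBot ℕ)) := by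
    rw [profitDP.eq_sup_feasibleSets,
      apply_sup_eq_sup_comp_of_linearOrder (fun x => (π j : WithBot ℕ) + x)
        (fun _ _ h => add_le_add_right h _) (WithBot.add_bot _)]
    refine sup_congr rfl fun T hT => ?_
    rw [sum_insert (profitDP.notMem_of_mem_feasibleSets hT)]
    rfl
  rw [profitDP.eq_sup_feasibleSets, profitDP.feasibleSets_succ, sup_union, sup_image, h_add]
  rfl

/-- The dynamic-programming recurrence: with processing times sorted in
non-decreasing order, `profit(j,C,L) = max{profit(j-1,C,L), π_j + profit(j-1, C-L, L-p_j)}`. -/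
theorem stmt_7 (n : ℕ) (p π : Fin n → ℕ)
    (hsorted : ∀ k k' : Fin n, k ≤ k' → p k ≤ p k')
    (j : Fin n) (C L : ℤ) :
    profitDP p π ((j : ℕ) + 1) C L =
      profitDP p π (j : ℕ) C L ⊔
        (((π j : ℕ) : WithBot ℕ) + profitDP p π (j : ℕ) (C - L) (L - (p j : ℤ))) :=
  stmt_7_general n p π j C L
end

section
/- In the flow-time LP relaxation, if a feasible integral schedule completes job j (with processing time p_j) at time C_j, then f'_j = Σ_{t=0}^{T} (x_{jt}/p_j · (t + 1/2 − r_j) + x_{jt}/2) ≤ C_j − r_j, where x_{jt} is the amount of job j processed in [t, t+1). In particular, when the job is processed contiguously in [C_j − p_j, C_j), equality holds: Σ_{t=C_j−p_j}^{C_j−1} ((t + 1/2 − r_j)/p_j) + p_j/2 = C_j − r_j. -/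
/-- Flow-time LP lower bound on flow time: if job `j` (processing time `p`,
release date `r`) is completely processed by time `C` with fractional amounts
`x t ∈ [0,1]` in each slot `[t,t+1)`, supported on `[r, C)` and summing to `p`,
then `f'_j = ∑_t (x t/p·(t + 1/2 - r) + x t/2) ≤ C - r`; and for the contiguous
schedule in `[C-p, C)` equality holds. -/
theorem stmt_11 (T r p C : ℕ) (hp : 0 < p) (hrC : r + p ≤ C) (hCT : C ≤ T + 1)
    (x : ℕ → ℝ) (hx0 : ∀ t, 0 ≤ x t) (hx1 : ∀ t, x t ≤ 1)
    (hsupp1 : ∀ t, t < r → x t = 0) (hsupp2 : ∀ t, C ≤ t → x t = 0)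
    (hsum : ∑ t ∈ Finset.range (T + 1), x t = (p : ℝ)) :
    (∑ t ∈ Finset.range (T + 1),
        (x t / (p : ℝ) * ((t : ℝ) + 1 / 2 - (r : ℝ)) + x t / 2) ≤ (C : ℝ) - r) ∧
      (∑ t ∈ Finset.Ico (C - p) C, (((t : ℝ) + 1 / 2 - (r : ℝ)) / (p : ℝ)) +
          (p : ℝ) / 2 = (C : ℝ) - r) := by
  have hpC : p ≤ C := le_trans (Nat.le_add_left p r) hrC
  have hpR : (0 : ℝ) < p := by exact_mod_cast hp
  -- Gauss sum
  have hg : (∑ i ∈ Finset.range p, (i : ℝ)) = p * (p - 1) / 2 := by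
    have h2 := Finset.sum_range_id_mul_two p
    have : ((∑ i ∈ Finset.range p, i : ℕ) : ℝ) * 2 = (p : ℝ) * ((p : ℝ) - 1) := by
      rw [← Nat.cast_ofNat, ← Nat.cast_mul, h2]
      push_cast [Nat.cast_sub hp]
      ring
    push_cast at this
    linarith
  -- key sum over the contiguous block
  have hkey : ∑ t ∈ Finset.Ico (C - p) C, ((t : ℝ) + 1 / 2 - r)
      = p * ((C : ℝ) - r) - p * p / 2 := by
    rw [Finset.sum_Ico_eq_sum_range, Nat.sub_sub_self hpC]
    have hc : ∀ i ∈ Finset.range p, (((C - p + i : ℕ)) : ℝ) + 1 / 2 - r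
        = ((C : ℝ) - p + 1 / 2 - r) + i := by
      intro i _
      push_cast [Nat.cast_sub hpC]
      ring
    rw [Finset.sum_congr rfl hc, Finset.sum_add_distrib, Finset.sum_const,
      Finset.card_range, nsmul_eq_mul, hg]
    ring
  have hcard : (Finset.Ico (C - p) C).card = p := by
    rw [Nat.card_Ico, Nat.sub_sub_self hpC]
  -- part 2
  have part2 : ∑ t ∈ Finset.Ico (C - p) C, (((t : ℝ) + 1 / 2 - (r : ℝ)) / (p : ℝ)) +
      (p : ℝ) / 2 = (C : ℝ) - r := by
    rw [← Finset.sum_div, hkey]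
    field_simp
    ring
  refine ⟨?_, part2⟩
  -- part 1: rearrangement argument
  set θ : ℝ := (C : ℝ) - p - r with hθ
  have hstep : ∀ t ∈ Finset.range (T + 1),
      x t * (((t : ℝ) + 1 / 2 - r) - θ)
        ≤ if t ∈ Finset.Ico (C - p) C then ((t : ℝ) + 1 / 2 - r) - θ else 0 := by
    intro t ht
    by_cases h : t ∈ Finset.Ico (C - p) C
    · simp only [h, if_true]
      rw [Finset.mem_Ico] at h
      have hle : ((C - p : ℕ) : ℝ) ≤ t := by exact_mod_cast h.1
      rw [Nat.cast_sub hpC] at hle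
      have h1 : (0 : ℝ) ≤ ((t : ℝ) + 1 / 2 - r) - θ := by rw [hθ]; linarith
      nlinarith [hx1 t, hx0 t]
    · simp only [h, if_false]
      rw [Finset.mem_Ico, not_and_or, not_le, not_lt] at h
      rcases h with h | h
      · have h2 : ((t + 1 : ℕ) : ℝ) ≤ ((C - p : ℕ) : ℝ) := by exact_mod_cast h
        rw [Nat.cast_sub hpC] at h2
        push_cast at h2
        have h1 : ((t : ℝ) + 1 / 2 - r) - θ ≤ 0 := by rw [hθ]; linarith
        nlinarith [hx0 t]
      · rw [hsupp2 t h]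
        simp
  have hsum_le : ∑ t ∈ Finset.range (T + 1), x t * (((t : ℝ) + 1 / 2 - r) - θ)
      ≤ ∑ t ∈ Finset.Ico (C - p) C, (((t : ℝ) + 1 / 2 - r) - θ) := by
    calc ∑ t ∈ Finset.range (T + 1), x t * (((t : ℝ) + 1 / 2 - r) - θ)
        ≤ ∑ t ∈ Finset.range (T + 1),
            (if t ∈ Finset.Ico (C - p) C then ((t : ℝ) + 1 / 2 - r) - θ else 0) :=
          Finset.sum_le_sum hstep
      _ = ∑ t ∈ Finset.Ico (C - p) C, (((t : ℝ) + 1 / 2 - r) - θ) := by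
          rw [Finset.sum_ite_mem]
          congr 1
          rw [Finset.inter_eq_right]
          intro t ht
          rw [Finset.mem_Ico] at ht
          rw [Finset.mem_range]
          omega
  -- assemble
  have expand : ∑ t ∈ Finset.range (T + 1),
      (x t / (p : ℝ) * ((t : ℝ) + 1 / 2 - (r : ℝ)) + x t / 2)
      = (∑ t ∈ Finset.range (T + 1), x t * ((t : ℝ) + 1 / 2 - r)) / p
        + (∑ t ∈ Finset.range (T + 1), x t) / 2 := by
    rw [Finset.sum_div, Finset.sum_div, ← Finset.sum_add_distrib]
    congr 1
    ext t
    ring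
  have e1 : ∑ t ∈ Finset.range (T + 1), x t * (((t : ℝ) + 1 / 2 - r) - θ)
      = (∑ t ∈ Finset.range (T + 1), x t * ((t : ℝ) + 1 / 2 - r)) - θ * p := by
    simp only [mul_sub]
    rw [Finset.sum_sub_distrib, ← Finset.sum_mul, hsum]
    ring
  have e2 : ∑ t ∈ Finset.Ico (C - p) C, (((t : ℝ) + 1 / 2 - r) - θ)
      = p * ((C : ℝ) - r) - p * p / 2 - θ * p := by
    rw [Finset.sum_sub_distrib, hkey, Finset.sum_const, hcard, nsmul_eq_mul]
    ring
  have hmain : ∑ t ∈ Finset.range (T + 1), x t * ((t : ℝ) + 1 / 2 - r)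
      ≤ p * ((C : ℝ) - r) - p * p / 2 := by
    have := hsum_le
    rw [e1, e2] at this
    linarith
  rw [expand, hsum]
  have hdiv : (∑ t ∈ Finset.range (T + 1), x t * ((t : ℝ) + 1 / 2 - r)) / p
      ≤ (p * ((C : ℝ) - r) - p * p / 2) / p := by
    apply div_le_div_of_nonneg_right hmain hpR.le
  have hend : (p * ((C : ℝ) - r) - p * p / 2) / p + p / 2 = (C : ℝ) - r := by
    field_simp
    ring
  linarith
end

section
/- Let (x,y,f) and (x̂,ŷ,f̂) be two fractional schedules with the same total processing per job (Σ_t x̂_{jt} = Σ_t x_{jt} for all j) in which jobs are partitioned into classes C_k with p̃_j = 2^k for j ∈ C_k. Define V_{k,t}(x) = Σ_{j∈C_k} Σ_{t'≥t} x_{jt'}. If V_{k,t}(x̂) ≤ V_{k,t}(x) for all k and all t, then Σ_j f̂_j ≤ Σ_j f_j, where f_j = Σ_t (x_{jt}/p̃_j·(t + 1/2 − r_j) + x_{jt}/2). -/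
/-!
The cost is affine in the schedule: for each job it is `p̃_j⁻¹ ∑_t t x_{jt}` plus a multiple of
the total processing `∑_t x_{jt}`, which both schedules share. The weight `p̃_j⁻¹` is constant on
each class, and Abel summation writes `∑_t t a_t` as the sum over `s ≥ 1` of the tails
`∑_{t ≥ s} a_t`, so domination of the class tail volumes `V_{k,t}` dominates the weighted moments.
-/

open Finset

theorem sum_range_natCast_mul_eq_sum_tail {R : Type*} [NonAssocSemiring R] (N : ℕ) (a : ℕ → R) :
    ∑ t ∈ range N, (t : R) * a t = ∑ s ∈ Ico 1 N, ∑ t ∈ Ico s N, a t := by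
  rw [sum_Ico_Ico_comm, range_eq_Ico]
  refine (sum_subset (Ico_subset_Ico_left zero_le_one) fun t ht ht' => ?_).symm.trans ?_
  · obtain rfl : t = 0 := by simp only [mem_Ico] at ht ht'; omega
    simp
  · simp [Nat.card_Ico]

theorem sum_sum_range_natCast_mul_le_of_tail_le {ι R : Type*} [Semiring R] [PartialOrder R]
    [IsOrderedAddMonoid R] {s : Finset ι} {N : ℕ} {a b : ι → ℕ → R}
    (h : ∀ t, ∑ j ∈ s, ∑ t' ∈ Ico t N, a j t' ≤ ∑ j ∈ s, ∑ t' ∈ Ico t N, b j t') :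
    ∑ j ∈ s, ∑ t ∈ range N, (t : R) * a j t ≤ ∑ j ∈ s, ∑ t ∈ range N, (t : R) * b j t := by
  simp only [sum_range_natCast_mul_eq_sum_tail]
  rw [sum_comm, sum_comm (s := s)]
  exact sum_le_sum fun t _ => h t

theorem sum_mul_le_sum_mul_of_fiberwise_le {ι κ R : Type*} [DecidableEq κ] [Semiring R]
    [PartialOrder R] [IsOrderedRing R] (s : Finset ι) (c : ι → κ) {w : κ → R} (hw : ∀ k, 0 ≤ w k)
    {f g : ι → R} (h : ∀ k, ∑ i ∈ s with c i = k, f i ≤ ∑ i ∈ s with c i = k, g i) :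
    ∑ i ∈ s, w (c i) * f i ≤ ∑ i ∈ s, w (c i) * g i := by
  have hfiber (u : ι → R) :
      ∑ i ∈ s, w (c i) * u i = ∑ k ∈ s.image c, w k * ∑ i ∈ s with c i = k, u i := by
    rw [← sum_fiberwise_of_maps_to fun i hi => mem_image_of_mem c hi]
    refine sum_congr rfl fun k _ => ?_
    rw [mul_sum]
    exact sum_congr rfl fun i hi => by rw [(mem_filter.mp hi).2]
  rw [hfiber, hfiber]
  exact sum_le_sum fun k _ => mul_le_mul_of_nonneg_left (h k) (hw k)

theorem sum_range_flowCost_eq (N : ℕ) (p ρ : ℝ) (z : ℕ → ℝ) :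
    ∑ t ∈ range N, (z t / p * ((t : ℝ) + 1 / 2 - ρ) + z t / 2) =
      p⁻¹ * ∑ t ∈ range N, (t : ℝ) * z t + ((1 / 2 - ρ) / p + 1 / 2) * ∑ t ∈ range N, z t := by
  rw [mul_sum, mul_sum, ← sum_add_distrib]
  exact sum_congr rfl fun t _ => by ring

/-- Rearrangement lemma for the flow-time LP: if `x̂` schedules the same total
amount of every job as `x`, jobs are classified with rounded processing time
`p̃_j = 2^(cl j)`, and for every class `k` and time `t` the remaining volume
`V_{k,t}(x̂) = ∑_{j∈C_k} ∑_{t'≥t} x̂_{jt'}` is at most `V_{k,t}(x)`, then the total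
LP flow cost of `x̂` is at most that of `x`. -/
theorem stmt_13 (n T : ℕ) (cl : Fin n → ℕ) (r : Fin n → ℝ)
    (x xhat : Fin n → ℕ → ℝ)
    (hame : ∀ j, ∑ t ∈ Finset.range (T + 1), xhat j t =
      ∑ t ∈ Finset.range (T + 1), x j t)
    (hV : ∀ k t,
      (∑ j ∈ Finset.univ.filter (fun j => cl j = k),
          ∑ t' ∈ Finset.Ico t (T + 1), xhat j t') ≤
        ∑ j ∈ Finset.univ.filter (fun j => cl j = k),
          ∑ t' ∈ Finset.Ico t (T + 1), x j t') :
    (∑ j, ∑ t ∈ Finset.range (T + 1),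
        (xhat j t / (2 : ℝ) ^ (cl j) * ((t : ℝ) + 1 / 2 - r j) + xhat j t / 2)) ≤
      ∑ j, ∑ t ∈ Finset.range (T + 1),
        (x j t / (2 : ℝ) ^ (cl j) * ((t : ℝ) + 1 / 2 - r j) + x j t / 2) := by
  have hmoment : ∑ j, ((2 : ℝ) ^ cl j)⁻¹ * ∑ t ∈ range (T + 1), (t : ℝ) * xhat j t ≤
      ∑ j, ((2 : ℝ) ^ cl j)⁻¹ * ∑ t ∈ range (T + 1), (t : ℝ) * x j t :=
    sum_mul_le_sum_mul_of_fiberwise_le (w := fun k => ((2 : ℝ) ^ k)⁻¹) univ cl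
      (fun k => by positivity)
      fun k => sum_sum_range_natCast_mul_le_of_tail_le (hV k)
  simp only [sum_range_flowCost_eq]
  simp only [sum_add_distrib, hame]
  linarith
end

section
/- In Stage I of the flow-time rounding algorithm, the total fractional processing time at most doubles: P(x', y', f') ≤ 2·P(x*, y*, f*). -/
/-- Stage I of the flow-time rounding at most doubles the total fractional
processing time: each class-`k` job has processing time in `(2^(k-1), 2^k]`, and
within each class the total scheduled fraction does not increase (mass is only
swapped between class-`k` jobs or deleted).  Writing the total fractional
processing time as `∑ j, p j * y j`, this forces `P(x',y',f') ≤ 2·P(x*,y*,f*)`. -/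
theorem stmt_15 (n : ℕ) (p : Fin n → ℝ) (cl : Fin n → ℕ)
    (ystar y' : Fin n → ℝ)
    (hclass : ∀ j, (2 : ℝ) ^ (cl j) / 2 < p j ∧ p j ≤ (2 : ℝ) ^ (cl j))
    (hystar : ∀ j, 0 ≤ ystar j) (hy' : ∀ j, 0 ≤ y' j)
    (hmass : ∀ k, (∑ j ∈ Finset.univ.filter (fun j => cl j = k), y' j) ≤
      ∑ j ∈ Finset.univ.filter (fun j => cl j = k), ystar j) :
    (∑ j, p j * y' j) ≤ 2 * ∑ j, p j * ystar j := by
  have h1 : (∑ j, p j * y' j)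
      = ∑ k ∈ Finset.univ.image cl,
          ∑ j ∈ Finset.univ.filter (fun j => cl j = k), p j * y' j := by
    rw [Finset.sum_fiberwise_of_maps_to (fun j _ => Finset.mem_image_of_mem cl (Finset.mem_univ j))]
  have h2 : (∑ j, p j * ystar j)
      = ∑ k ∈ Finset.univ.image cl,
          ∑ j ∈ Finset.univ.filter (fun j => cl j = k), p j * ystar j := by
    rw [Finset.sum_fiberwise_of_maps_to (fun j _ => Finset.mem_image_of_mem cl (Finset.mem_univ j))]
  rw [h1, h2, Finset.mul_sum]
  apply Finset.sum_le_sum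
  intro k _
  calc (∑ j ∈ Finset.univ.filter (fun j => cl j = k), p j * y' j)
      ≤ ∑ j ∈ Finset.univ.filter (fun j => cl j = k), (2:ℝ)^k * y' j := by
        apply Finset.sum_le_sum
        intro j hj
        simp only [Finset.mem_filter] at hj
        exact mul_le_mul_of_nonneg_right (hj.2 ▸ (hclass j).2) (hy' j)
    _ = (2:ℝ)^k * ∑ j ∈ Finset.univ.filter (fun j => cl j = k), y' j := by
        rw [Finset.mul_sum]
    _ ≤ (2:ℝ)^k * ∑ j ∈ Finset.univ.filter (fun j => cl j = k), ystar j := by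
        apply mul_le_mul_of_nonneg_left (hmass k) (by positivity)
    _ = ∑ j ∈ Finset.univ.filter (fun j => cl j = k), (2:ℝ)^k * ystar j := by
        rw [Finset.mul_sum]
    _ ≤ ∑ j ∈ Finset.univ.filter (fun j => cl j = k), 2 * (p j * ystar j) := by
        apply Finset.sum_le_sum
        intro j hj
        simp only [Finset.mem_filter] at hj
        have h := (hclass j).1
        rw [hj.2] at h
        nlinarith [hystar j]
    _ = 2 * ∑ j ∈ Finset.univ.filter (fun j => cl j = k), p j * ystar j := by
        rw [Finset.mul_sum]
end

section
/- If Δ ∈ [0,1], p₁ ≤ p_s are positive reals with the same rounded power-of-two value p̃ (i.e., p̃/2 < p₁ ≤ p_s ≤ p̃), and r₁ ≤ r_s ≤ t are release dates/time, then replacing a Δ fraction of job s at slot t by a Δ fraction of job 1 changes the LP flow cost by (Δ/p̃·(t + 1/2 − r_s) + Δ/2)·(p₁ − p_s) + (Δp₁/p̃)·(r_s − r₁) ≤ (Δp₁/p̃)·(r_s − r₁). -/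
/-- Cost-increment bound in the swapping phase: replacing a `Δ` fraction of job
`s` at slot `t` by a `Δ` fraction of job `1` (both of the same class, so both use
the rounded processing time `p̃`) changes the LP flow cost by at most
`(Δ p₁/p̃)(r_s − r₁)`. -/
theorem stmt_16 (Δ p₁ ps ptil r₁ rs t : ℝ)
    (hΔ0 : 0 ≤ Δ) (hΔ1 : Δ ≤ 1)
    (hp₁ : 0 < p₁) (h₁s : p₁ ≤ ps) (hsptil : ps ≤ ptil) (hhalf : ptil / 2 < p₁)
    (hr : r₁ ≤ rs) (hrt : rs ≤ t) :
    (Δ / ptil * (t + 1 / 2 - rs) + Δ / 2) * (p₁ - ps) + Δ * p₁ / ptil * (rs - r₁) ≤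
      Δ * p₁ / ptil * (rs - r₁) := by
  have hptil : 0 < ptil := lt_of_lt_of_le hp₁ (h₁s.trans hsptil)
  have hc : 0 ≤ Δ / ptil * (t + 1 / 2 - rs) + Δ / 2 := by
    have : 0 ≤ Δ / ptil := div_nonneg hΔ0 hptil.le
    nlinarith
  nlinarith [mul_nonpos_of_nonneg_of_nonpos hc (by linarith : p₁ - ps ≤ 0)]
end

section
/- In the GAP-with-outliers reduction, suppose the Shmoys–Tardos algorithm returns an assignment S for instance I' with cost at most C, makespan at most T + min(max_j p_{ij}, T) on each real machine i, and profit of scheduled jobs at least Π − max_j π_j. Then moving the single highest-profit job j' from the virtual machine to the real machine minimizing its processing time (where every job satisfies min_i p_{ij} ≤ T, and all remaining assignment costs are at most εC) yields an assignment with total profit at least Π, cost at most (1+ε)C, and makespan at most 3T. -/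
/-- Total assignment cost of a (partial) assignment `a` of jobs to real machines
(`none` means the job is on the virtual profit machine, at zero cost). -/
def gapCost {n m : ℕ} (c : Fin m → Fin n → ℝ) (a : Fin n → Option (Fin m)) : ℝ :=
  ∑ j, (a j).elim 0 (fun i => c i j)

/-- Load (makespan) of real machine `i` under assignment `a`. -/
def gapLoad {n m : ℕ} (p : Fin m → Fin n → ℝ) (a : Fin n → Option (Fin m))
    (i : Fin m) : ℝ :=
  ∑ j ∈ Finset.univ.filter (fun j => a j = some i), p i j

/-- Total profit of the jobs scheduled on real machines under `a`. -/
def gapProfit {n m : ℕ} (π : Fin n → ℝ) (a : Fin n → Option (Fin m)) : ℝ :=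
  ∑ j ∈ Finset.univ.filter (fun j => a j ≠ none), π j

/-- GAP-with-outliers reduction, final step: given the Shmoys–Tardos assignment
`a` with cost at most `C`, load at most `T + min(max_j p_{ij}, T)` on each real
machine, and scheduled profit at least `Π − π_{j'}` where `j'` is the
highest-profit job on the virtual machine, moving `j'` to the real machine `i⋆`
minimizing its processing time (every job has some machine with `p ≤ T`, and all
remaining costs are at most `εC`) yields profit at least `Π`, cost at most
`(1+ε)C`, and makespan at most `3T`. -/
theorem stmt_19 (n m : ℕ) (hn : 0 < n) (hm : 0 < m)
    (p c : Fin m → Fin n → ℝ) (π : Fin n → ℝ) (Pi C T ε : ℝ)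
    (hπ : ∀ j, 0 ≤ π j) (hpnn : ∀ i j, 0 ≤ p i j) (hcnn : ∀ i j, 0 ≤ c i j)
    (hT : 0 ≤ T) (hε : 0 ≤ ε)
    (a : Fin n → Option (Fin m))
    (hcost : gapCost c a ≤ C)
    (hload : ∀ i, gapLoad p a i ≤
      T + min (Finset.univ.sup' (Finset.univ_nonempty_iff.mpr ⟨⟨0, hn⟩⟩)
        (fun j => p i j)) T)
    (j' : Fin n) (hj' : a j' = none)
    (hj'max : ∀ j, a j = none → π j ≤ π j')
    (hprofit : Pi - π j' ≤ gapProfit π a)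
    (hsmallc : ∀ i j, c i j ≤ ε * C)
    (hminp : ∀ j, ∃ i, p i j ≤ T)
    (istar : Fin m) (histar : ∀ i, p istar j' ≤ p i j') :
    gapProfit π (Function.update a j' (some istar)) ≥ Pi ∧
      gapCost c (Function.update a j' (some istar)) ≤ (1 + ε) * C ∧
      ∀ i, gapLoad p (Function.update a j' (some istar)) i ≤ 3 * T := by
  set a' := Function.update a j' (some istar) with ha'
  have key : ∀ j, a' j = if j = j' then some istar else a j := fun j =>
    Function.update_apply a j' _ j
  have hpT : p istar j' ≤ T := by
    obtain ⟨i0, hi0⟩ := hminp j'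
    exact (histar i0).trans hi0
  have hεC : c istar j' ≤ ε * C := hsmallc istar j'
  refine ⟨?_, ?_, ?_⟩
  · have hset : Finset.univ.filter (fun j => a' j ≠ none) =
        insert j' (Finset.univ.filter (fun j => a j ≠ none)) := by
      ext j
      by_cases h : j = j' <;> simp [key, h, hj']
    have : gapProfit π a' = π j' + gapProfit π a := by
      rw [gapProfit, hset, Finset.sum_insert (by simp [hj']), gapProfit]
    rw [this]
    linarith
  · have hsum : ∀ j, (a' j).elim 0 (fun i => c i j) =
        (a j).elim 0 (fun i => c i j) + (if j = j' then c istar j' else 0) := by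
      intro j
      by_cases h : j = j' <;> simp [key, h, hj']
    have : gapCost c a' = gapCost c a + c istar j' := by
      unfold gapCost
      rw [Finset.sum_congr rfl (fun j _ => hsum j), Finset.sum_add_distrib,
        Finset.sum_ite_eq' Finset.univ j' (fun _ => c istar j')]
      simp
    rw [this]
    linarith
  · intro i
    have hbound : gapLoad p a i ≤ 2 * T := by
      have := hload i
      have hmin : min (Finset.univ.sup' (Finset.univ_nonempty_iff.mpr ⟨⟨0, hn⟩⟩)
          (fun j => p i j)) T ≤ T := min_le_right _ _
      linarith
    by_cases h : i = istar
    · subst h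
      have hset : Finset.univ.filter (fun j => a' j = some i) =
          insert j' (Finset.univ.filter (fun j => a j = some i)) := by
        ext j
        by_cases hjj : j = j' <;> simp [key, hjj, hj']
      have : gapLoad p a' i = p i j' + gapLoad p a i := by
        rw [gapLoad, hset, Finset.sum_insert (by simp [hj']), gapLoad]
      rw [this]
      linarith
    · have hset : Finset.univ.filter (fun j => a' j = some i) =
          Finset.univ.filter (fun j => a j = some i) := by
        ext j
        by_cases hjj : j = j' <;> simp [key, hjj, hj', Ne.symm h, h]
      have : gapLoad p a' i = gapLoad p a i := by rw [gapLoad, hset, gapLoad]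
      rw [this]
      linarith
end
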